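/- arXiv:2111.14761 — 2 statements merged into one kernel-verified Lean document; each statement's English description precedes it below -/
import Mathlib

section
/- Suppose σ_k ≥ (L/2 + 1)/(1 − η₂) in the ARIG setting (f with L-Lipschitz gradient, gradient error threshold ω ≤ 1/σ_k, step s_k = −(1/σ_k)g_k with ‖g_k − ∇f(x_k)‖ ≤ ω‖g_k‖). Then the ratio ρ_k = (f(x_k) − f(x_k + s_k))/((1/σ_k)‖g_k‖²) satisfies ρ_k ≥ η₂. -/
/-!
By the descent lemma for an `L`-smooth function, the step `s = -(1/σ) g` decreases `f` by at
least `(1/σ)⟪∇f(x), g⟫ - (L/2)‖g‖²/σ²`, and the relative gradient error bound gives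
`⟪∇f(x), g⟫ ≥ (1 - ω)‖g‖²`. Hence `ρ ≥ 1 - ω - L/(2σ) ≥ 1 - (L/2 + 1)/σ ≥ η₂`, using `ω ≤ 1/σ`
and the lower bound on `σ`.
-/

open scoped RealInnerProductSpace NNReal

section InnerProductSpace

variable {E : Type*} [NormedAddCommGroup E] [InnerProductSpace ℝ E]
  {f : E → ℝ} {f' : E → E}

theorem hasDerivAt_comp_add_smul_of_hasGradientAt [CompleteSpace E]
    (hf' : ∀ y, HasGradientAt f (f' y) y) (x s : E) (t : ℝ) :
    HasDerivAt (fun t : ℝ => f (x + t • s)) ⟪f' (x + t • s), s⟫ t := by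
  have hline : HasDerivAt (fun t : ℝ => x + t • s) s t := by
    simpa using ((hasDerivAt_id t).smul_const s).const_add x
  have h := (hf' (x + t • s)).hasFDerivAt.comp_hasDerivAt t hline
  simp only [InnerProductSpace.toDual_apply_apply] at h
  exact h

theorem LipschitzWith.inner_sub_le {K : ℝ≥0} (hLip : LipschitzWith K f') (x s : E) {t : ℝ}
    (ht : 0 ≤ t) : ⟪f' (x + t • s), s⟫ - ⟪f' x, s⟫ ≤ K * t * ‖s‖ ^ 2 := by
  rw [← inner_sub_left]
  calc ⟪f' (x + t • s) - f' x, s⟫ ≤ ‖f' (x + t • s) - f' x‖ * ‖s‖ := real_inner_le_norm _ _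
    _ ≤ K * ‖(x + t • s) - x‖ * ‖s‖ := by
        gcongr
        exact hLip.norm_sub_le _ _
    _ = K * t * ‖s‖ ^ 2 := by
        rw [add_sub_cancel_left, norm_smul, Real.norm_of_nonneg ht]
        ring

theorem image_add_le_of_lipschitzWith_gradient [CompleteSpace E] {K : ℝ≥0}
    (hf' : ∀ y, HasGradientAt f (f' y) y) (hLip : LipschitzWith K f') (x s : E) :
    f (x + s) ≤ f x + ⟪f' x, s⟫ + K / 2 * ‖s‖ ^ 2 := by
  have hbound (t : ℝ) : HasDerivAt (fun t : ℝ => f x + t * ⟪f' x, s⟫ + K / 2 * t ^ 2 * ‖s‖ ^ 2)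
      (⟪f' x, s⟫ + K * t * ‖s‖ ^ 2) t := by
    have h : HasDerivAt (fun t : ℝ => f x + t * ⟪f' x, s⟫ + K / 2 * t ^ 2 * ‖s‖ ^ 2)
        (0 + 1 * ⟪f' x, s⟫ + K / 2 * (2 * t ^ 1) * ‖s‖ ^ 2) t :=
      ((hasDerivAt_const t (f x)).add ((hasDerivAt_id t).mul_const _)).add
        (((hasDerivAt_pow 2 t).const_mul _).mul_const _)
    convert h using 1
    ring
  have hφ := hasDerivAt_comp_add_smul_of_hasGradientAt hf' x s
  simpa using image_le_of_deriv_right_le_deriv_boundary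
    (fun t _ => (hφ t).continuousAt.continuousWithinAt) (fun t _ => (hφ t).hasDerivWithinAt)
    (by simp) (fun t _ => (hbound t).continuousAt.continuousWithinAt)
    (fun t _ => (hbound t).hasDerivWithinAt)
    (fun t ht => by linarith [hLip.inner_sub_le x s ht.1]) (Set.right_mem_Icc.2 zero_le_one)

theorem mul_norm_sq_le_inner_of_norm_sub_le {g v : E} {ω : ℝ} (h : ‖g - v‖ ≤ ω * ‖g‖) :
    (1 - ω) * ‖g‖ ^ 2 ≤ ⟪v, g⟫ := by
  have hsub : ⟪g - v, g⟫ ≤ ω * ‖g‖ ^ 2 :=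
    calc ⟪g - v, g⟫ ≤ ‖g - v‖ * ‖g‖ := real_inner_le_norm _ _
      _ ≤ ω * ‖g‖ * ‖g‖ := by gcongr
      _ = ω * ‖g‖ ^ 2 := by ring
  rw [inner_sub_left, real_inner_self_eq_norm_sq] at hsub
  linarith

theorem inexact_gradient_step_decrease [CompleteSpace E] {K : ℝ≥0}
    (hf' : ∀ y, HasGradientAt f (f' y) y) (hLip : LipschitzWith K f') {x g : E} {ω σ : ℝ}
    (hσ : 0 < σ) (herr : ‖g - f' x‖ ≤ ω * ‖g‖) :
    (1 / σ) * (1 - ω - K / (2 * σ)) * ‖g‖ ^ 2 ≤ f x - f (x + -(1 / σ) • g) := by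
  have hdescent := image_add_le_of_lipschitzWith_gradient hf' hLip x (-(1 / σ) • g)
  have hinner := mul_norm_sq_le_inner_of_norm_sub_le herr
  rw [real_inner_smul_right, norm_smul, Real.norm_eq_abs, abs_neg,
    abs_of_pos (one_div_pos.2 hσ)] at hdescent
  have hcoef : (1 / σ) * (1 - ω - K / (2 * σ)) * ‖g‖ ^ 2
      = (1 / σ) * ((1 - ω) * ‖g‖ ^ 2) - K / 2 * (1 / σ * ‖g‖) ^ 2 := by
    field_simp
  rw [hcoef]
  linarith [mul_le_mul_of_nonneg_left hinner (one_div_pos.2 hσ).le]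

end InnerProductSpace

theorem stmt_2_general {n : ℕ} (f : EuclideanSpace ℝ (Fin n) → ℝ)
    (f' : EuclideanSpace ℝ (Fin n) → EuclideanSpace ℝ (Fin n))
    (L σ ω η₂ : ℝ) (x g s : EuclideanSpace ℝ (Fin n))
    (hf' : ∀ y, HasGradientAt f (f' y) y)
    (hL : 0 < L)
    (hLip : LipschitzWith (Real.toNNReal L) f')
    (hη2' : η₂ < 1)
    (hσ : σ ≥ (L / 2 + 1) / (1 - η₂))
    (hωσ : ω ≤ 1 / σ)
    (hg : g ≠ 0)
    (herr : ‖g - f' x‖ ≤ ω * ‖g‖)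
    (hs : s = -(1 / σ) • g) :
    (f x - f (x + s)) / ((1 / σ) * ‖g‖ ^ 2) ≥ η₂ := by
  have hη : 0 < 1 - η₂ := sub_pos.2 hη2'
  have hσpos : 0 < σ := (div_pos (by linarith) hη).trans_le hσ
  have hdecrease := inexact_gradient_step_decrease hf' hLip hσpos herr
  rw [Real.coe_toNNReal L hL.le, ← hs] at hdecrease
  have hcoef : η₂ ≤ 1 - ω - L / (2 * σ) := by
    have hσ' : (L / 2 + 1) / σ ≤ 1 - η₂ := by
      rw [div_le_iff₀ hσpos, mul_comm]
      exact (div_le_iff₀ hη).1 hσ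
    have hsplit : (L / 2 + 1) / σ = L / (2 * σ) + 1 / σ := by
      field_simp
    linarith
  rw [ge_iff_le, le_div_iff₀ (mul_pos (one_div_pos.2 hσpos) (pow_pos (norm_pos_iff.2 hg) 2))]
  calc η₂ * (1 / σ * ‖g‖ ^ 2) ≤ (1 / σ) * (1 - ω - L / (2 * σ)) * ‖g‖ ^ 2 := by
        rw [mul_left_comm, ← mul_assoc]
        gcongr
    _ ≤ f x - f (x + s) := hdecrease

theorem stmt_2 {n : ℕ} (f : EuclideanSpace ℝ (Fin n) → ℝ)
    (f' : EuclideanSpace ℝ (Fin n) → EuclideanSpace ℝ (Fin n))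
    (L σ ω η₂ : ℝ) (x g s : EuclideanSpace ℝ (Fin n))
    (hf : ContDiff ℝ 1 f)
    (hf' : ∀ y, HasGradientAt f (f' y) y)
    (hL : 0 < L)
    (hLip : LipschitzWith (Real.toNNReal L) f')
    (hη2 : 0 < η₂) (hη2' : η₂ < 1)
    (hσ : σ ≥ (L / 2 + 1) / (1 - η₂))
    (hω : 0 < ω) (hωσ : ω ≤ 1 / σ)
    (hg : g ≠ 0)
    (herr : ‖g - f' x‖ ≤ ω * ‖g‖)
    (hs : s = -(1 / σ) • g) :
    (f x - f (x + s)) / ((1 / σ) * ‖g‖ ^ 2) ≥ η₂ :=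
  stmt_2_general f f' L σ ω η₂ x g s hf' hL hLip hη2' hσ hωσ hg herr hs
end

section
/- Let H⁰ be symmetric positive definite with eigenvalues in [μ₁, μ₂], let s, ŷ ∈ ℝⁿ satisfy sᵀŷ ≥ (η/μ₂)‖s‖² and ‖ŷ‖ ≤ L₁‖s‖ where L₁ = L_g + 1/μ₁, and let H = V̂ H⁰ V̂ᵀ + ρ̂ s sᵀ with ρ̂ = 1/(sᵀŷ) and V̂ = I − ρ̂ s ŷᵀ. Then λ_min(H) ≥ min(1/L₁, μ₁/(1 + (μ₁μ₂/η)L₁²)) > 0 and λ_max(H) ≤ μ₂/η + max(0, (μ₂³/η²)L₁² − μ₂/(1 + (μ₂²/η)L₁²)). -/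
/-!
For a unit vector `x` put `t = sᵀx` and `u = Vᵀx = x - ρ t ŷ`; then `xᵀHx = uᵀH⁰u + ρ t²`, and the
spectrum of `H⁰` puts `uᵀH⁰u` between `μ₁ ‖u‖²` and `μ₂ ‖u‖²`. Everything then follows from the
weighted Cauchy–Schwarz inequality `‖v + w‖² ≤ (a + b) (‖v‖² / a + ‖w‖² / b)`.

Lower bound: `x = u + ρ t ŷ` gives `1 ≤ (1/μ₁ + ρ‖ŷ‖²) (μ₁ ‖u‖² + ρ t²)`.

Upper bound: put `B = (μ₂ L₁ / η)² ≥ ρ² ‖s‖² ‖ŷ‖²` and `Λ = 1/η + B - 1/(1 + η B)`, so that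
`μ₂ Λ ≤ μ₂/η + max 0 (μ₂ B - μ₂/(1 + η B))`. Since `ρ sᵀŷ = 1`, the components along `s` cancel
in `u`: `u = x⊥ - ρ t ŷ⊥` with `x⊥, ŷ⊥` orthogonal to `s`, `‖x⊥‖² = 1 - t²/‖s‖²` and
`ρ² ‖s‖² ‖ŷ⊥‖² = ρ² ‖s‖² ‖ŷ‖² - 1 ≤ B - 1`. With weights `1` and `Λ - 1`, the bound
`μ₂ ‖u‖² + ρ t² ≤ μ₂ Λ` becomes affine in `t²/‖s‖² ∈ [0, 1]`, and holds at both ends because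
`(B - 1) Λ ≤ (Λ - 1) (Λ - 1/η)`.
-/

open Matrix

variable {ι : Type*} [Fintype ι]

lemma dotProduct_self_nonneg (v : ι → ℝ) : 0 ≤ v ⬝ᵥ v :=
  Fintype.sum_nonneg fun i => mul_self_nonneg (v i)

lemma dotProduct_self_pos {v : ι → ℝ} (hv : v ≠ 0) : 0 < v ⬝ᵥ v :=
  (dotProduct_self_nonneg v).lt_of_ne' (dotProduct_self_eq_zero.not.2 hv)

lemma dotProduct_add_self_le (v w : ι → ℝ) {a b : ℝ} (ha : 0 < a) (hb : 0 < b) :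
    (v + w) ⬝ᵥ (v + w) ≤ (a + b) * (v ⬝ᵥ v / a + w ⬝ᵥ w / b) := by
  have h := dotProduct_self_nonneg (b • v - a • w)
  simp only [add_dotProduct, dotProduct_add, sub_dotProduct, dotProduct_sub, smul_dotProduct,
    dotProduct_smul, smul_eq_mul, dotProduct_comm w v] at h ⊢
  rw [div_add_div _ _ ha.ne' hb.ne', mul_div_assoc', le_div_iff₀ (by positivity)]
  nlinarith

lemma dotProduct_self_sub_proj (s z : ι → ℝ) (hs : s ⬝ᵥ s ≠ 0) :
    (z - (s ⬝ᵥ z / s ⬝ᵥ s) • s) ⬝ᵥ (z - (s ⬝ᵥ z / s ⬝ᵥ s) • s) =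
      z ⬝ᵥ z - (s ⬝ᵥ z) ^ 2 / s ⬝ᵥ s := by
  simp only [sub_dotProduct, dotProduct_sub, smul_dotProduct, dotProduct_smul, smul_eq_mul,
    dotProduct_comm z s]
  field_simp
  ring

/-- `Λ` with `Λ² - (B + 1/η) Λ + 1/η = (1 / (1 + η B))²`: slightly above the larger root of this
quadratic, i.e. the larger eigenvalue of `!![1, c; c, c² + 1/η]` for `c² = B - 1`. -/
noncomputable def bfgsUpperBound (η B : ℝ) : ℝ := 1 / η + B - 1 / (1 + η * B)

lemma one_lt_bfgsUpperBound {η B : ℝ} (hη : 0 < η) (hB : 1 ≤ B) : 1 < bfgsUpperBound η B := by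
  have : 1 / (1 + η * B) < 1 / η := one_div_lt_one_div_of_lt hη (by nlinarith)
  rw [bfgsUpperBound]
  linarith

lemma sub_one_mul_bfgsUpperBound_le {η B : ℝ} (hη : 0 < η) (hB : 0 ≤ B) :
    (B - 1) * bfgsUpperBound η B ≤ (bfgsUpperBound η B - 1) * (bfgsUpperBound η B - 1 / η) := by
  have hq : (1 / η + B) * (1 / (1 + η * B)) = 1 / η := by
    have : 1 + η * B ≠ 0 := by positivity
    field_simp
  rw [bfgsUpperBound]
  nlinarith [sq_nonneg (1 / (1 + η * B))]

lemma div_one_add_mul_le_dotProduct_sub_smul {μ ρ : ℝ} (hμ : 0 < μ) (hρ : 0 < ρ) {x y : ι → ℝ}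
    (hx : x ⬝ᵥ x = 1) (hy : y ≠ 0) (t : ℝ) :
    μ / (1 + μ * ρ * (y ⬝ᵥ y)) ≤ μ * ((x - (ρ * t) • y) ⬝ᵥ (x - (ρ * t) • y)) + ρ * t ^ 2 := by
  set u := x - (ρ * t) • y
  have hY := dotProduct_self_pos hy
  have hρty : (ρ * t) • y ⬝ᵥ (ρ * t) • y / (ρ * (y ⬝ᵥ y)) = ρ * t ^ 2 := by
    simp only [smul_dotProduct, dotProduct_smul, smul_eq_mul]
    field_simp
  have h := dotProduct_add_self_le u ((ρ * t) • y) (inv_pos.2 hμ) (mul_pos hρ hY)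
  rw [sub_add_cancel, hx, div_inv_eq_mul, hρty] at h
  calc μ / (1 + μ * ρ * (y ⬝ᵥ y)) = 1 / (μ⁻¹ + ρ * (y ⬝ᵥ y)) := by field_simp
    _ ≤ μ * (u ⬝ᵥ u) + ρ * t ^ 2 := by
      rw [div_le_iff₀ (by positivity)]
      linarith

lemma dotProduct_sub_smul_le_bfgsUpperBound {μ η ρ B : ℝ} (hμ : 0 ≤ μ) (hη : 0 < η)
    {s y x : ι → ℝ} (hs : s ≠ 0) (hρσ : ρ * (s ⬝ᵥ y) = 1) (hx : x ⬝ᵥ x = 1)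
    (hρT : ρ * (s ⬝ᵥ s) ≤ μ / η) (hB : ρ ^ 2 * ((s ⬝ᵥ s) * (y ⬝ᵥ y)) ≤ B) :
    μ * ((x - (ρ * (s ⬝ᵥ x)) • y) ⬝ᵥ (x - (ρ * (s ⬝ᵥ x)) • y)) + ρ * (s ⬝ᵥ x) ^ 2 ≤
      μ * bfgsUpperBound η B := by
  set T := s ⬝ᵥ s
  set t := s ⬝ᵥ x
  set Λ := bfgsUpperBound η B
  have hT : 0 < T := dotProduct_self_pos hs
  set z := x - (t / T) • s
  set w := y - (s ⬝ᵥ y / T) • s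
  have hu : x - (ρ * t) • y = z + (-(ρ * t)) • w := by
    have : ρ * t * (s ⬝ᵥ y / T) = t / T := by rw [mul_div_assoc', mul_right_comm, hρσ, one_mul]
    simp only [z, w, smul_sub, smul_smul, neg_mul, this]
    module
  have hz : z ⬝ᵥ z = 1 - t ^ 2 / T := by rw [dotProduct_self_sub_proj s x hT.ne', hx]
  have hww : w ⬝ᵥ w = y ⬝ᵥ y - (s ⬝ᵥ y) ^ 2 / T := dotProduct_self_sub_proj s y hT.ne'
  have hw : (-(ρ * t)) • w ⬝ᵥ (-(ρ * t)) • w = t ^ 2 / T * (ρ ^ 2 * (T * (y ⬝ᵥ y)) - 1) := by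
    rw [smul_dotProduct, dotProduct_smul, hww, smul_eq_mul, smul_eq_mul]
    field_simp
    linear_combination (-(t ^ 2 * (1 + ρ * (s ⬝ᵥ y)))) * hρσ
  have hB1 : 1 ≤ B := by
    have := dotProduct_self_nonneg w
    rw [hww, sub_nonneg, div_le_iff₀ hT] at this
    nlinarith
  have hτ : t ^ 2 / T ≤ 1 := by linarith [dotProduct_self_nonneg z]
  have hρt : ρ * t ^ 2 ≤ μ / η * (t ^ 2 / T) := by
    calc ρ * t ^ 2 = ρ * T * (t ^ 2 / T) := by field_simp
      _ ≤ μ / η * (t ^ 2 / T) := by gcongr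
  set τ := t ^ 2 / T
  set β := ρ ^ 2 * (T * (y ⬝ᵥ y))
  have hΛ := one_lt_bfgsUpperBound hη hB1
  have hcoef : Λ * ((β - 1) / (Λ - 1)) ≤ Λ - 1 / η := by
    rw [mul_div_assoc', div_le_iff₀ (sub_pos.2 hΛ)]
    nlinarith [sub_one_mul_bfgsUpperBound_le hη (by linarith : 0 ≤ B)]
  have h := dotProduct_add_self_le z ((-(ρ * t)) • w) one_pos (sub_pos.2 hΛ)
  rw [← hu, hz, hw, add_sub_cancel, div_one, mul_div_assoc] at h
  calc μ * ((x - (ρ * t) • y) ⬝ᵥ (x - (ρ * t) • y)) + ρ * t ^ 2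
      ≤ μ * (Λ * (1 - τ + τ * ((β - 1) / (Λ - 1)))) + μ / η * τ := by gcongr
    _ = μ * (Λ * (1 - τ) + τ * (Λ * ((β - 1) / (Λ - 1)) + 1 / η)) := by ring
    _ ≤ μ * (Λ * (1 - τ) + τ * (Λ - 1 / η + 1 / η)) := by gcongr
    _ = μ * Λ := by ring

noncomputable def bfgsInverseUpdate [DecidableEq ι] (ρ : ℝ) (s y : ι → ℝ) (H : Matrix ι ι ℝ) :
    Matrix ι ι ℝ :=
  (1 - ρ • vecMulVec s y) * H * (1 - ρ • vecMulVec s y)ᵀ + ρ • vecMulVec s s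

lemma dotProduct_bfgsInverseUpdate_mulVec [DecidableEq ι] (ρ : ℝ) (s y x : ι → ℝ)
    (H : Matrix ι ι ℝ) :
    x ⬝ᵥ (bfgsInverseUpdate ρ s y H *ᵥ x) =
      (x - (ρ * (s ⬝ᵥ x)) • y) ⬝ᵥ (H *ᵥ (x - (ρ * (s ⬝ᵥ x)) • y)) + ρ * (s ⬝ᵥ x) ^ 2 := by
  have hV : (1 - ρ • vecMulVec s y)ᵀ *ᵥ x = x - (ρ * (s ⬝ᵥ x)) • y := by
    rw [transpose_sub, transpose_one, transpose_smul, transpose_vecMulVec, sub_mulVec, one_mulVec,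
      smul_mulVec, vecMulVec_mulVec, op_smul_eq_smul, smul_smul]
  rw [bfgsInverseUpdate, add_mulVec, dotProduct_add, ← mulVec_mulVec, ← mulVec_mulVec,
    dotProduct_mulVec, ← mulVec_transpose, hV, smul_mulVec, vecMulVec_mulVec, op_smul_eq_smul]
  simp only [dotProduct_smul, smul_eq_mul, dotProduct_comm x s]
  ring

namespace Matrix.IsHermitian
variable [DecidableEq ι] {A : Matrix ι ι ℝ} (hA : A.IsHermitian)

lemma posSemidef_sub_smul_one {a : ℝ} (h : ∀ i, a ≤ hA.eigenvalues i) :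
    (A - a • 1).PosSemidef := by
  rw [posSemidef_iff_isHermitian_and_spectrum_nonneg, ← Algebra.algebraMap_eq_smul_one]
  refine ⟨hA.sub (IsSelfAdjoint.algebraMap _ (.all a)), ?_⟩
  rw [← spectrum.sub_singleton_eq, hA.spectrum_real_eq_range_eigenvalues]
  rintro _ ⟨_, ⟨i, rfl⟩, _, rfl, rfl⟩
  exact sub_nonneg.2 (h i)

lemma posSemidef_smul_one_sub {b : ℝ} (h : ∀ i, hA.eigenvalues i ≤ b) :
    (b • 1 - A).PosSemidef := by
  rw [posSemidef_iff_isHermitian_and_spectrum_nonneg, ← Algebra.algebraMap_eq_smul_one]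
  refine ⟨(IsSelfAdjoint.algebraMap _ (.all b)).sub hA, ?_⟩
  rw [← spectrum.singleton_sub_eq, hA.spectrum_real_eq_range_eigenvalues]
  rintro _ ⟨_, rfl, _, ⟨i, rfl⟩, rfl⟩
  exact sub_nonneg.2 (h i)

lemma mul_dotProduct_self_le_dotProduct_mulVec {a : ℝ} (h : ∀ i, a ≤ hA.eigenvalues i)
    (x : ι → ℝ) : a * (x ⬝ᵥ x) ≤ x ⬝ᵥ (A *ᵥ x) := by
  simpa [sub_mulVec, smul_mulVec, dotProduct_smul] using
    (hA.posSemidef_sub_smul_one h).dotProduct_mulVec_nonneg x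

lemma dotProduct_mulVec_le_mul_dotProduct_self {b : ℝ} (h : ∀ i, hA.eigenvalues i ≤ b)
    (x : ι → ℝ) : x ⬝ᵥ (A *ᵥ x) ≤ b * (x ⬝ᵥ x) := by
  simpa [sub_mulVec, smul_mulVec, dotProduct_smul] using
    (hA.posSemidef_smul_one_sub h).dotProduct_mulVec_nonneg x

lemma exists_dotProduct_self_eq_one_and_eigenvalues_eq (i : ι) :
    ∃ x : ι → ℝ, x ⬝ᵥ x = 1 ∧ hA.eigenvalues i = x ⬝ᵥ (A *ᵥ x) := by
  refine ⟨hA.eigenvectorBasis i, ?_, by simpa using hA.eigenvalues_eq i⟩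
  have := hA.eigenvectorBasis.inner_eq_one i
  rw [EuclideanSpace.inner_eq_star_dotProduct] at this
  simpa using this

end Matrix.IsHermitian

section BFGS
variable [DecidableEq ι] {H₀ : Matrix ι ι ℝ} {ρ : ℝ} {s y : ι → ℝ}

lemma div_one_add_mul_le_eigenvalues_bfgsInverseUpdate (hH₀ : H₀.IsHermitian)
    (hH : (bfgsInverseUpdate ρ s y H₀).IsHermitian) {μ : ℝ} (hμ : 0 < μ)
    (heig : ∀ i, μ ≤ hH₀.eigenvalues i) (hρ : 0 < ρ) (hy : y ≠ 0) (i : ι) :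
    μ / (1 + μ * ρ * (y ⬝ᵥ y)) ≤ hH.eigenvalues i := by
  obtain ⟨x, hx, hi⟩ := hH.exists_dotProduct_self_eq_one_and_eigenvalues_eq i
  rw [hi, dotProduct_bfgsInverseUpdate_mulVec]
  grw [div_one_add_mul_le_dotProduct_sub_smul hμ hρ hx hy (s ⬝ᵥ x),
    hH₀.mul_dotProduct_self_le_dotProduct_mulVec heig]

lemma eigenvalues_bfgsInverseUpdate_le_mul_bfgsUpperBound (hH₀ : H₀.IsHermitian)
    (hH : (bfgsInverseUpdate ρ s y H₀).IsHermitian) {μ η B : ℝ} (hμ : 0 ≤ μ) (hη : 0 < η)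
    (heig : ∀ i, hH₀.eigenvalues i ≤ μ) (hs : s ≠ 0) (hρσ : ρ * (s ⬝ᵥ y) = 1)
    (hρT : ρ * (s ⬝ᵥ s) ≤ μ / η) (hB : ρ ^ 2 * ((s ⬝ᵥ s) * (y ⬝ᵥ y)) ≤ B) (i : ι) :
    hH.eigenvalues i ≤ μ * bfgsUpperBound η B := by
  obtain ⟨x, hx, hi⟩ := hH.exists_dotProduct_self_eq_one_and_eigenvalues_eq i
  rw [hi, dotProduct_bfgsInverseUpdate_mulVec]
  grw [hH₀.dotProduct_mulVec_le_mul_dotProduct_self heig]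
  exact dotProduct_sub_smul_le_bfgsUpperBound hμ hη hs hρσ hx hρT hB

end BFGS

theorem stmt_16_general {n : ℕ} (H0 H : Matrix (Fin n) (Fin n) ℝ)
    (hH0 : H0.PosDef)
    (μ₁ μ₂ η L₁ ρh : ℝ)
    (hμ1 : 0 < μ₁) (hμ12 : μ₁ ≤ μ₂)
    (heig : ∀ i, μ₁ ≤ hH0.1.eigenvalues i ∧ hH0.1.eigenvalues i ≤ μ₂)
    (hη0 : 0 < η)
    (s yhat : Fin n → ℝ) (hs : s ≠ 0)
    (hsy : s ⬝ᵥ yhat ≥ (η / μ₂) * (s ⬝ᵥ s))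
    (hyn : Real.sqrt (yhat ⬝ᵥ yhat) ≤ L₁ * Real.sqrt (s ⬝ᵥ s))
    (hρ : ρh = 1 / (s ⬝ᵥ yhat))
    (Vh : Matrix (Fin n) (Fin n) ℝ)
    (hV : Vh = 1 - ρh • vecMulVec s yhat)
    (hHdef : H = Vh * H0 * Vhᵀ + ρh • vecMulVec s s)
    (hHh : H.IsHermitian) :
    0 < min (1 / L₁) (μ₁ / (1 + (μ₁ * μ₂ / η) * L₁ ^ 2)) ∧
      (∀ i, min (1 / L₁) (μ₁ / (1 + (μ₁ * μ₂ / η) * L₁ ^ 2)) ≤ hHh.eigenvalues i) ∧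
      (∀ i, hHh.eigenvalues i ≤
        μ₂ / η + max 0 ((μ₂ ^ 3 / η ^ 2) * L₁ ^ 2 - μ₂ / (1 + (μ₂ ^ 2 / η) * L₁ ^ 2))) := by
  have hμ₂ : 0 < μ₂ := hμ1.trans_le hμ12
  have hT : 0 < s ⬝ᵥ s := dotProduct_self_pos hs
  have hσ : 0 < s ⬝ᵥ yhat := lt_of_lt_of_le (by positivity) hsy
  have hy : yhat ≠ 0 := by rintro rfl; simp at hσ
  have hY₀ := dotProduct_self_nonneg yhat
  have hL₁ : 0 < L₁ := pos_of_mul_pos_left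
    ((Real.sqrt_pos.2 (dotProduct_self_pos hy)).trans_le hyn) (Real.sqrt_nonneg _)
  have hY : yhat ⬝ᵥ yhat ≤ L₁ ^ 2 * (s ⬝ᵥ s) := by
    simpa [mul_pow, Real.sq_sqrt hT.le] using (Real.sqrt_le_iff.1 hyn).2
  have hρσ : ρh * (s ⬝ᵥ yhat) = 1 := by rw [hρ]; field_simp
  have hρ₀ : 0 < ρh := by rw [hρ]; positivity
  have hρT : ρh * (s ⬝ᵥ s) ≤ μ₂ / η := by
    rw [hρ, one_div_mul_eq_div, div_le_div_iff₀ hσ hη0]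
    rw [ge_iff_le, div_mul_eq_mul_div, div_le_iff₀ hμ₂] at hsy
    linarith
  have hρY : ρh * (yhat ⬝ᵥ yhat) ≤ μ₂ / η * L₁ ^ 2 := by
    calc ρh * (yhat ⬝ᵥ yhat) ≤ ρh * (L₁ ^ 2 * (s ⬝ᵥ s)) := by gcongr
      _ = ρh * (s ⬝ᵥ s) * L₁ ^ 2 := by ring
      _ ≤ μ₂ / η * L₁ ^ 2 := by gcongr
  have hB : ρh ^ 2 * ((s ⬝ᵥ s) * (yhat ⬝ᵥ yhat)) ≤ μ₂ / η * (μ₂ / η * L₁ ^ 2) := by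
    rw [sq, mul_mul_mul_comm]; gcongr
  subst hHdef hV
  refine ⟨by positivity, fun i => ?_, fun i => ?_⟩
  · calc min (1 / L₁) (μ₁ / (1 + (μ₁ * μ₂ / η) * L₁ ^ 2))
        ≤ μ₁ / (1 + μ₁ * (μ₂ / η * L₁ ^ 2)) := by
          rw [mul_div_assoc, mul_assoc]; exact min_le_right _ _
      _ ≤ μ₁ / (1 + μ₁ * ρh * (yhat ⬝ᵥ yhat)) := by rw [mul_assoc]; gcongr
      _ ≤ hHh.eigenvalues i := div_one_add_mul_le_eigenvalues_bfgsInverseUpdate hH0.1 hHh hμ1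
            (fun i => (heig i).1) hρ₀ hy i
  · calc hHh.eigenvalues i ≤ μ₂ * bfgsUpperBound η (μ₂ / η * (μ₂ / η * L₁ ^ 2)) :=
          eigenvalues_bfgsInverseUpdate_le_mul_bfgsUpperBound hH0.1 hHh hμ₂.le hη0
            (fun i => (heig i).2) hs hρσ hρT hB i
      _ = μ₂ / η + ((μ₂ ^ 3 / η ^ 2) * L₁ ^ 2 - μ₂ / (1 + (μ₂ ^ 2 / η) * L₁ ^ 2)) := by
          rw [bfgsUpperBound]; field_simp; ring
      _ ≤ _ := by gcongr; exact le_max_right _ _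

theorem stmt_16 {n : ℕ} (H0 H : Matrix (Fin n) (Fin n) ℝ)
    (hH0 : H0.PosDef)
    (μ₁ μ₂ η Lg L₁ ρh : ℝ)
    (hμ1 : 0 < μ₁) (hμ12 : μ₁ ≤ μ₂)
    (heig : ∀ i, μ₁ ≤ hH0.1.eigenvalues i ∧ hH0.1.eigenvalues i ≤ μ₂)
    (hη0 : 0 < η) (hη1 : η < 1) (hLg : 0 < Lg)
    (hL1 : L₁ = Lg + 1 / μ₁)
    (s yhat : Fin n → ℝ) (hs : s ≠ 0)
    (hsy : s ⬝ᵥ yhat ≥ (η / μ₂) * (s ⬝ᵥ s))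
    (hyn : Real.sqrt (yhat ⬝ᵥ yhat) ≤ L₁ * Real.sqrt (s ⬝ᵥ s))
    (hρ : ρh = 1 / (s ⬝ᵥ yhat))
    (Vh : Matrix (Fin n) (Fin n) ℝ)
    (hV : Vh = 1 - ρh • vecMulVec s yhat)
    (hHdef : H = Vh * H0 * Vhᵀ + ρh • vecMulVec s s)
    (hHh : H.IsHermitian) :
    0 < min (1 / L₁) (μ₁ / (1 + (μ₁ * μ₂ / η) * L₁ ^ 2)) ∧
      (∀ i, min (1 / L₁) (μ₁ / (1 + (μ₁ * μ₂ / η) * L₁ ^ 2)) ≤ hHh.eigenvalues i) ∧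
      (∀ i, hHh.eigenvalues i ≤
        μ₂ / η + max 0 ((μ₂ ^ 3 / η ^ 2) * L₁ ^ 2 - μ₂ / (1 + (μ₂ ^ 2 / η) * L₁ ^ 2))) :=
  stmt_16_general H0 H hH0 μ₁ μ₂ η L₁ ρh hμ1 hμ12 heig hη0 s yhat hs hsy hyn hρ Vh hV hHdef hHh
end
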